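/- Converse of the addition theorem for greedy decompositions: let d_1, …, d_k be degrees such that Δ̃(d_1), …, Δ̃(d_k) are pairwise totally disjoint, and let (α_1, …, α_r) be a greedy decomposition of d_1 + ⋯ + d_k. Then there exist unique greedy decompositions (α_1^i, …, α_{r_i}^i) of d_i for each 1 ≤ i ≤ k such that r = r_1 + ⋯ + r_k and each (α_1^i, …, α_{r_i}^i) is a subsequence of (α_1, …, α_r). -/

import Mathlib

/-!
Common setup: a finite crystallographic root system `R` spanning a Euclidean space `E`,
with a base of simple roots, positive roots, Weyl group, Bruhat order, Hecke (Demazure)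
product, degrees, greedy decompositions, extended supports, minimal degrees and
generalized cascades of orthogonal roots, following the conventions of the paper.
-/

open scoped RealInnerProductSpace BigOperators

attribute [local instance] Classical.propDecidable

noncomputable section

variable {E : Type} [NormedAddCommGroup E] [InnerProductSpace ℝ E] [FiniteDimensional ℝ E]

/-- The reflection `s_α` along a root `α` (the orthogonal reflection fixing the
hyperplane orthogonal to `α`). -/
def sRefl (α : E) : E ≃ₗᵢ[ℝ] E := Submodule.reflection (Submodule.span ℝ {α})ᗮ

/-- The coroot `α^∨ = 2α/(α,α)`. -/
def coroot (α : E) : E := (2 / ⟪α, α⟫) • α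

/-- `x` is a nonnegative integral combination of elements of `Δ`. -/
def nonnegComb (Δ : Finset E) (x : E) : Prop :=
  ∃ c : E → ℕ, x = ∑ β ∈ Δ, (c β : ℝ) • β

/-- `x` lies in the `ℤ`-span of `T`. -/
def inZSpan (T : Finset E) (x : E) : Prop :=
  ∃ c : E → ℤ, x = ∑ β ∈ T, (c β : ℝ) • β

/-- A finite crystallographic (reduced) root system spanning `E`, together with a base:
`R` is the set of roots, `simples` the set of simple roots, `pos` the set of positive
roots. -/
structure RootSystemData (E : Type) [NormedAddCommGroup E] [InnerProductSpace ℝ E]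
    [FiniteDimensional ℝ E] where
  R : Finset E
  simples : Finset E
  pos : Finset E
  zero_not_mem : (0 : E) ∉ R
  span_top : Submodule.span ℝ (R : Set E) = ⊤
  neg_mem : ∀ α ∈ R, -α ∈ R
  reduced : ∀ α ∈ R, ∀ t : ℝ, t • α ∈ R → t = 1 ∨ t = -1
  crystallographic : ∀ α ∈ R, ∀ β ∈ R, ∃ n : ℤ, ⟪β, coroot α⟫ = (n : ℝ)
  refl_mem : ∀ α ∈ R, ∀ β ∈ R, sRefl α β ∈ R
  simples_subset : simples ⊆ pos
  pos_subset : pos ⊆ R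
  lin_indep : LinearIndependent ℝ (fun β : simples => (β : E))
  pos_iff : ∀ α ∈ R, (α ∈ pos ↔ nonnegComb simples α)
  pos_or_neg : ∀ α ∈ R, α ∈ pos ∨ -α ∈ pos
  coroot_comb : ∀ α ∈ pos, ∃ c : E → ℕ, coroot α = ∑ β ∈ simples, (c β : ℝ) • coroot β

variable (S : RootSystemData E)

/-- The partial order on roots: `α ≤ α'` iff `α' - α` is a nonnegative combination of
simple roots. -/
def rootLE (α α' : E) : Prop := nonnegComb S.simples (α' - α)

/-- The partial order on coroots: `corootLE S α α'` means `α^∨ ≤ α'^∨` in `ℤΔ^∨`. -/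
def corootLE (α α' : E) : Prop :=
  ∃ c : E → ℕ, coroot α' - coroot α = ∑ β ∈ S.simples, (c β : ℝ) • coroot β

/-- The support `Δ(α)` of a root: the set of simple roots `β` with `β ≤ α`. -/
def suppR (α : E) : Finset E := S.simples.filter fun β => rootLE S β α

/-- The root subsystem `R(α)` of `R` generated by the support `Δ(α)`. -/
def subsysOf (α : E) : Finset E := S.R.filter fun μ => inZSpan (suppR S α) μ

/-- A positive root `φ` is locally high if it is the highest root of `R(φ)`. -/
def IsLocallyHigh (φ : E) : Prop :=
  φ ∈ S.pos ∧ ∀ μ ∈ subsysOf S φ, rootLE S μ φ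

/-- Two roots are strongly orthogonal if neither their sum nor their difference lies
in `R ∪ {0}`. -/
def StronglyOrthogonal (α α' : E) : Prop :=
  α + α' ∉ S.R ∧ α - α' ∉ S.R ∧ α + α' ≠ 0 ∧ α - α' ≠ 0

/-- Two sets of roots are totally disjoint if each element of one is strongly
orthogonal to each element of the other. -/
def TotallyDisjoint (A B : Finset E) : Prop :=
  ∀ a ∈ A, ∀ b ∈ B, StronglyOrthogonal S a b

/-- Adjacency in the Dynkin diagram: distinct and not orthogonal. -/
def DynkinAdj (β β' : E) : Prop := β ≠ β' ∧ ⟪β, β'⟫ ≠ 0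

/-- A set of simple roots is connected (as a subset of the Dynkin diagram). -/
def DynkinConnected (C : Finset E) : Prop :=
  ∀ β ∈ C, ∀ β' ∈ C,
    Relation.ReflTransGen (fun x y => x ∈ C ∧ y ∈ C ∧ DynkinAdj x y) β β'

/-- `C` is a connected component of `A` (as subsets of the Dynkin diagram): a maximal
connected subset of `A`. -/
def IsConnComponent (A C : Finset E) : Prop :=
  C.Nonempty ∧ C ⊆ A ∧ DynkinConnected C ∧
    ∀ C', C ⊆ C' → C' ⊆ A → DynkinConnected C' → C' = C

/-- `R_P^+`, the set of positive roots lying in `ℤΔ_P`. -/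
def posP (ΔP : Finset E) : Finset E := S.pos.filter fun γ => inZSpan ΔP γ

/-- The (nonnegative integral) coefficients of the coroot `α^∨` in the basis of simple
coroots. -/
def corootCoeffs (α : E) : E → ℕ :=
  if h : ∃ c : E → ℕ, (∀ β, β ∉ S.simples → c β = 0) ∧
      coroot α = ∑ β ∈ S.simples, (c β : ℝ) • coroot β
  then h.choose else fun _ => 0

/-- The degree `d(α) = α^∨ + ℤΔ_P^∨`, recorded as the coefficient function on
`Δ ∖ Δ_P` (a degree is an element of `ℤΔ^∨/ℤΔ_P^∨` with nonnegative coefficients,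
i.e. a function `Δ ∖ Δ_P → ℕ`). -/
def degOf (ΔP : Finset E) (α : E) : E → ℕ :=
  fun β => if β ∈ ΔP then 0 else corootCoeffs S α β

/-- A degree: a nonnegative coefficient function supported on `Δ ∖ Δ_P`.  Degrees are
ordered coefficientwise (pointwise). -/
def IsDegree (ΔP : Finset E) (d : E → ℕ) : Prop :=
  ∀ β, β ∉ S.simples \ ΔP → d β = 0

/-- `α` is a maximal root of the degree `d`: a maximal element of
`{α ∈ R⁺ ∖ R_P⁺ : d(α) ≤ d}`. -/
def IsMaxRoot (ΔP : Finset E) (d : E → ℕ) (α : E) : Prop :=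
  α ∈ S.pos ∧ α ∉ posP S ΔP ∧ degOf S ΔP α ≤ d ∧
    ∀ α', α' ∈ S.pos → α' ∉ posP S ΔP → degOf S ΔP α' ≤ d → rootLE S α α' → α' = α

/-- A root `α ∈ R⁺ ∖ R_P⁺` is `P`-cosmall if it is a maximal root of the degree
`d(α)`. -/
def PCosmall (ΔP : Finset E) (α : E) : Prop :=
  IsMaxRoot S ΔP (degOf S ΔP α) α

/-- `IsGreedy S ΔP l d`: the list `l` is a greedy decomposition of the degree `d`. -/
def IsGreedy (S : RootSystemData E) (ΔP : Finset E) : List E → (E → ℕ) → Prop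
  | [], d => d = fun _ => 0
  | α :: t, d => IsMaxRoot S ΔP d α ∧ IsGreedy S ΔP t (d - degOf S ΔP α)

/-- The extended support determined by a (greedy) decomposition: the union of the
supports of its entries. -/
def extSuppOf (l : List E) : Finset E := l.foldr (fun α s => suppR S α ∪ s) ∅

/-- The Weyl group: the subgroup of linear isometries generated by the reflections in
the roots. -/
def weylGroup : Subgroup (E ≃ₗᵢ[ℝ] E) :=
  Subgroup.closure {g | ∃ α ∈ S.R, g = sRefl α}

/-- The inversion set `I(w) = {γ ∈ R⁺ : w(γ) ∈ -R⁺}`. -/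
def invSet (w : E ≃ₗᵢ[ℝ] E) : Finset E := S.pos.filter fun γ => -(w γ) ∈ S.pos

/-- The length of a Weyl group element: the cardinality of its inversion set. -/
def len (w : E ≃ₗᵢ[ℝ] E) : ℕ := (invSet S w).card

/-- The Bruhat order on the Weyl group: generated by multiplication by reflections
which increases length. -/
def bruhatLE (u v : E ≃ₗᵢ[ℝ] E) : Prop :=
  Relation.ReflTransGen (fun x y => (∃ α ∈ S.R, y = x * sRefl α) ∧ len S x < len S y) u v

/-- The support `Δ(w) = {β ∈ Δ : s_β ⪯ w}` of a Weyl group element. -/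
def suppW (w : E ≃ₗᵢ[ℝ] E) : Finset E := S.simples.filter fun β => bruhatLE S (sRefl β) w

/-- The Hecke (Demazure) product: `hecke S u v` is the Bruhat-maximum of
`{u'v' : u' ⪯ u, v' ⪯ v}` (this characterizes the usual Hecke product `u · v` defined
via reduced words). -/
def hecke (u v : E ≃ₗᵢ[ℝ] E) : E ≃ₗᵢ[ℝ] E :=
  if h : ∃ w, (∃ u' v', bruhatLE S u' u ∧ bruhatLE S v' v ∧ w = u' * v') ∧
      ∀ w', (∃ u' v', bruhatLE S u' u ∧ bruhatLE S v' v ∧ w' = u' * v') → bruhatLE S w' w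
  then h.choose else u * v

/-- The Hecke product `g₁ · g₂ · … · gₙ` of a list of Weyl group elements. -/
def heckeFold (l : List (E ≃ₗᵢ[ℝ] E)) : E ≃ₗᵢ[ℝ] E := l.foldl (hecke S) 1

/-- The Hecke product `s_{α₁} · … · s_{αᵣ}` of the reflections along a list of roots. -/
def heckeWord (l : List E) : E ≃ₗᵢ[ℝ] E := heckeFold S (l.map sRefl)

/-- The parabolic subgroup `W_P` of the Weyl group. -/
def parabolicW (ΔP : Finset E) : Subgroup (E ≃ₗᵢ[ℝ] E) :=
  Subgroup.closure {g | ∃ β ∈ ΔP, g = sRefl β}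

/-- The longest element `w_P` of the parabolic subgroup `W_P`. -/
def longestWP (ΔP : Finset E) : E ≃ₗᵢ[ℝ] E :=
  if h : ∃ w ∈ parabolicW ΔP, ∀ w' ∈ parabolicW ΔP, len S w' ≤ len S w
  then h.choose else 1

/-- A choice of greedy decomposition of the degree `d` (the greedy decomposition is
unique up to reordering). -/
def greedyOf (ΔP : Finset E) (d : E → ℕ) : List E :=
  if h : ∃ l, IsGreedy S ΔP l d then h.choose else []

/-- The element `z_d^P`, determined by `z_d^P w_P = s_{α₁} · … · s_{αᵣ} · w_P` for a
greedy decomposition `(α₁, …, αᵣ)` of `d`. -/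
def zP (ΔP : Finset E) (d : E → ℕ) : E ≃ₗᵢ[ℝ] E :=
  heckeFold S ((greedyOf S ΔP d).map sRefl ++ [longestWP S ΔP]) * (longestWP S ΔP)⁻¹

/-- `d ∈ Π_P`: `d` is a minimal degree, i.e. a minimal element of
`{d' : z_d^P ⪯ z_{d'}^P}`. -/
def MemPiP (ΔP : Finset E) (d : E → ℕ) : Prop :=
  IsDegree S ΔP d ∧
    ∀ d', IsDegree S ΔP d' → bruhatLE S (zP S ΔP d) (zP S ΔP d') → d' ≤ d → d' = d

/-- The element `z_e^B = s_{α₁} · … · s_{αᵣ}` (Hecke product) for a greedy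
decomposition `(α₁, …, αᵣ)` of the degree `e ∈ H₂(G/B)`. -/
def zB (e : E → ℕ) : E ≃ₗᵢ[ℝ] E := heckeWord S (greedyOf S ∅ e)

/-- `e ∈ Π_B`: `e` is a minimal degree in `H₂(G/B)`. -/
def MemPiB (e : E → ℕ) : Prop :=
  IsDegree S ∅ e ∧
    ∀ e', IsDegree S ∅ e' → bruhatLE S (zB S e) (zB S e') → e' ≤ e → e' = e

/-- The generalized cascade of orthogonal roots `B_{R,e}`: the set of positive roots
occurring in a greedy decomposition of `e`. -/
def cascade (e : E → ℕ) : Finset E :=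
  S.pos.filter fun α => ∃ l, IsGreedy S ∅ l e ∧ α ∈ l

/-- The generalized chain cascade `C_{R,e}(φ) = {α ∈ B_{R,e} : α ≥ φ}`. -/
def chainCascade (e : E → ℕ) (φ : E) : Finset E :=
  (cascade S e).filter fun α => rootLE S φ α

end


/-!
Write `A i` for the extended support of `d i`. Strongly orthogonal simple roots are orthogonal,
so the blocks `A i` are pairwise orthogonal. A maximal root pairs nonnegatively with every simple
root of `Δ_P` (otherwise reflecting in it would give a larger root of the same degree), hence a
root of `Δ_P` outside `A i` is orthogonal to `A i`. As supports of positive roots are connected,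
every root of a greedy decomposition of a degree `≤ ∑ dᵢ` then has its support in a single
block, so its degree is `≤ dᵢ` for exactly one `i`. Filtering a greedy decomposition of `∑ dᵢ`
by this condition therefore splits it into greedy decompositions of the `dᵢ`, and counting
lengths shows that no other family of sublists does.
-/

section

variable {E : Type} [NormedAddCommGroup E] [InnerProductSpace ℝ E]

lemma inner_coroot (x α : E) : ⟪x, coroot α⟫ = 2 * ⟪x, α⟫ / ⟪α, α⟫ := by
  rw [coroot, real_inner_smul_right]
  ring

lemma sRefl_apply (α x : E) : sRefl α x = x - ⟪x, coroot α⟫ • α := by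
  rw [sRefl, Submodule.reflection_apply, Submodule.starProjection_orthogonal_val,
    Submodule.starProjection_singleton, inner_coroot, real_inner_comm,
    real_inner_self_eq_norm_sq]
  module

end

namespace RootSystemData

variable {E : Type} [NormedAddCommGroup E] [InnerProductSpace ℝ E] [FiniteDimensional ℝ E]
  (S : RootSystemData E)

lemma ne_zero_of_mem {α : E} (hα : α ∈ S.R) : α ≠ 0 :=
  fun h => S.zero_not_mem (h ▸ hα)

lemma mem_R_of_mem_simples {β : E} (hβ : β ∈ S.simples) : β ∈ S.R :=
  S.pos_subset (S.simples_subset hβ)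

lemma inner_self_pos_of_mem {α : E} (hα : α ∈ S.R) : 0 < ⟪α, α⟫ :=
  real_inner_self_pos.2 (S.ne_zero_of_mem hα)

lemma mem_span_simples_of_mem_pos {α : E} (hα : α ∈ S.pos) :
    α ∈ Submodule.span ℝ (S.simples : Set E) := by
  obtain ⟨c, rfl⟩ := (S.pos_iff α (S.pos_subset hα)).1 hα
  exact Submodule.sum_mem _ fun β hβ => Submodule.smul_mem _ _ (Submodule.subset_span hβ)

lemma span_simples : Submodule.span ℝ (S.simples : Set E) = ⊤ := by
  rw [eq_top_iff, ← S.span_top, Submodule.span_le]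
  intro α hα
  rcases S.pos_or_neg α hα with h | h
  · exact S.mem_span_simples_of_mem_pos h
  · simpa using Submodule.neg_mem _ (S.mem_span_simples_of_mem_pos h)

noncomputable def simplesBasis : Module.Basis S.simples ℝ E :=
  Module.Basis.mk S.lin_indep (by simp [S.span_simples])

/-- The coordinate along `β` in the basis of simple roots; zero if `β` is not simple. -/
noncomputable def coeff (β : E) : E →ₗ[ℝ] ℝ :=
  if h : β ∈ S.simples then S.simplesBasis.coord ⟨β, h⟩ else 0

lemma coeff_of_notMem {β : E} (hβ : β ∉ S.simples) : S.coeff β = 0 := dif_neg hβ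

lemma coeff_simple {β : E} (hβ : β ∈ S.simples) (x : E) :
    S.coeff x β = if x = β then 1 else 0 := by
  by_cases hx : x ∈ S.simples
  · have hb : S.simplesBasis ⟨β, hβ⟩ = β := by simp [simplesBasis]
    rw [coeff, dif_pos hx, ← hb, Module.Basis.coord_apply, Module.Basis.repr_self,
      Finsupp.single_apply, hb]
    simp [Subtype.ext_iff, eq_comm]
  · rw [S.coeff_of_notMem hx, if_neg (fun h : x = β => hx (h ▸ hβ))]
    rfl

lemma sum_coeff_smul (x : E) : ∑ β ∈ S.simples, S.coeff β x • β = x := by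
  conv_rhs => rw [← S.simplesBasis.sum_repr x]
  rw [← Finset.sum_coe_sort S.simples]
  refine Finset.sum_congr rfl fun β _ => ?_
  simp [coeff, β.2, simplesBasis]

lemma coeff_sum_smul (f : E → ℝ) {β : E} (hβ : β ∈ S.simples) :
    S.coeff β (∑ x ∈ S.simples, f x • x) = f β := by
  rw [map_sum, Finset.sum_congr rfl fun x hx => by rw [map_smul, S.coeff_simple hx]]
  simp [hβ]

lemma exists_natCoeffs_of_mem_pos {α : E} (hα : α ∈ S.pos) :
    ∃ c : E → ℕ, α = ∑ x ∈ S.simples, (c x : ℝ) • x ∧ ∀ β ∈ S.simples, S.coeff β α = c β := by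
  obtain ⟨c, hc⟩ := (S.pos_iff α (S.pos_subset hα)).1 hα
  exact ⟨c, hc, fun β hβ => by rw [hc, S.coeff_sum_smul _ hβ]⟩

lemma coeff_nonneg {α : E} (hα : α ∈ S.pos) (β : E) : 0 ≤ S.coeff β α := by
  by_cases hβ : β ∈ S.simples
  · obtain ⟨c, -, hc⟩ := S.exists_natCoeffs_of_mem_pos hα
    rw [hc β hβ]
    positivity
  · simp [S.coeff_of_notMem hβ]

lemma mem_pos_of_coeff_pos {α β : E} (hα : α ∈ S.R) (hβ : 0 < S.coeff β α) : α ∈ S.pos := by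
  refine (S.pos_or_neg α hα).resolve_right fun hneg => ?_
  have := S.coeff_nonneg hneg β
  rw [map_neg] at this
  linarith

lemma mem_suppR_iff {α β : E} (hα : α ∈ S.pos) :
    β ∈ suppR S α ↔ β ∈ S.simples ∧ S.coeff β α ≠ 0 := by
  obtain ⟨c, -, hc⟩ := S.exists_natCoeffs_of_mem_pos hα
  rw [suppR, Finset.mem_filter]
  simp only [rootLE, nonnegComb, and_congr_right_iff]
  intro hβ
  constructor
  · rintro ⟨c', hc'⟩
    have h := congrArg (S.coeff β) hc'
    rw [map_sub, S.coeff_sum_smul _ hβ, S.coeff_simple hβ, if_pos rfl] at h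
    have : (0 : ℝ) ≤ c' β := by positivity
    linarith
  · intro hne
    have h1 : 1 ≤ c β := Nat.one_le_iff_ne_zero.2 fun h0 => hne (by rw [hc β hβ, h0]; simp)
    refine ⟨Function.update c β (c β - 1), ?_⟩
    rw [← S.sum_coeff_smul (α - β)]
    refine Finset.sum_congr rfl fun x hx => ?_
    rw [map_sub, S.coeff_simple hβ, hc x hx]
    by_cases hxβ : x = β
    · subst hxβ
      simp [Nat.cast_sub h1]
    · simp [hxβ]

lemma mem_posP_iff {ΔP : Finset E} (hΔP : ΔP ⊆ S.simples) {α : E} (hα : α ∈ S.pos) :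
    α ∈ posP S ΔP ↔ ∀ β ∈ S.simples, β ∉ ΔP → S.coeff β α = 0 := by
  obtain ⟨c, hαc, hc⟩ := S.exists_natCoeffs_of_mem_pos hα
  rw [posP, Finset.mem_filter]
  simp only [inZSpan, hα, true_and]
  constructor
  · rintro ⟨c', rfl⟩ β - hβP
    rw [map_sum, Finset.sum_congr rfl fun x hx => by rw [map_smul, S.coeff_simple (hΔP hx)]]
    simp [hβP]
  · intro h
    refine ⟨fun x => c x, ?_⟩
    rw [hαc, ← Finset.sum_subset hΔP fun x hx hxP => ?_]
    · simp
    · rw [← hc x hx, h x hx hxP, zero_smul]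

lemma exists_coeff_ne_zero_of_notMem_posP {ΔP : Finset E} (hΔP : ΔP ⊆ S.simples) {α : E}
    (hα : α ∈ S.pos) (hαP : α ∉ posP S ΔP) :
    ∃ β ∈ S.simples, β ∉ ΔP ∧ S.coeff β α ≠ 0 := by
  by_contra! h
  exact hαP ((S.mem_posP_iff hΔP hα).2 h)

lemma inner_eq_sum_coeff_mul (x y : E) : ⟪x, y⟫ = ∑ β ∈ S.simples, S.coeff β x * ⟪β, y⟫ := by
  conv_lhs => rw [← S.sum_coeff_smul x]
  simp [sum_inner, real_inner_smul_left]

lemma inner_nonpos_of_mem_simples {β β' : E} (hβ : β ∈ S.simples) (hβ' : β' ∈ S.simples)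
    (hne : β ≠ β') : ⟪β, β'⟫ ≤ 0 := by
  by_contra! hpos
  obtain ⟨n, hn⟩ := S.crystallographic β (S.mem_R_of_mem_simples hβ) β'
    (S.mem_R_of_mem_simples hβ')
  have hn0 : (0 : ℝ) < n := by
    rw [← hn, inner_coroot, real_inner_comm]
    have := S.inner_self_pos_of_mem (S.mem_R_of_mem_simples hβ)
    positivity
  -- `s_β β' = β' - n β` would be a root with coefficients of both signs
  have hmem := S.refl_mem β (S.mem_R_of_mem_simples hβ) β' (S.mem_R_of_mem_simples hβ')
  rw [sRefl_apply, hn] at hmem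
  have hpos' := S.mem_pos_of_coeff_pos hmem (β := β') (by
    simp [S.coeff_simple hβ, S.coeff_simple hβ', Ne.symm hne])
  have := S.coeff_nonneg hpos' β
  simp [S.coeff_simple hβ, S.coeff_simple hβ', hne] at this
  exact (not_lt.2 (Int.cast_nonpos.2 this)) hn0

lemma add_mem_of_inner_neg {β β' : E} (hβ : β ∈ S.simples) (hβ' : β' ∈ S.simples)
    (hneg : ⟪β, β'⟫ < 0) : β + β' ∈ S.R := by
  have hR := S.mem_R_of_mem_simples hβ
  have hR' := S.mem_R_of_mem_simples hβ'
  have hne : β ≠ β' := by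
    rintro rfl
    linarith [S.inner_self_pos_of_mem hR]
  obtain ⟨n, hn⟩ := S.crystallographic β hR β' hR'
  obtain ⟨m, hm⟩ := S.crystallographic β' hR' β hR
  have hββ := S.inner_self_pos_of_mem hR
  have hβ'β' := S.inner_self_pos_of_mem hR'
  rw [inner_coroot, real_inner_comm] at hn
  rw [inner_coroot] at hm
  have hn' : (n : ℝ) < 0 := by rw [← hn]; exact div_neg_of_neg_of_pos (by linarith) hββ
  have hm' : (m : ℝ) < 0 := by rw [← hm]; exact div_neg_of_neg_of_pos (by linarith) hβ'β'
  -- strict Cauchy–Schwarz, as `β` and `β'` are not proportional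
  have hcs : -⟪β, β'⟫ < ‖β‖ * ‖β'‖ := by
    rw [← inner_neg_left, ← norm_neg β]
    refine inner_lt_norm_mul_iff_real.2 fun h => ?_
    have := congrArg (S.coeff β) h
    simp [S.coeff_simple hβ, S.coeff_simple hβ', hne, S.ne_zero_of_mem hR'] at this
  have hsq : ⟪β, β'⟫ ^ 2 < ⟪β, β⟫ * ⟪β', β'⟫ := by
    rw [real_inner_self_eq_norm_sq, real_inner_self_eq_norm_sq]
    nlinarith
  have hnm : (n : ℝ) * m < 4 := by
    rw [← hn, ← hm, div_mul_div_comm, div_lt_iff₀ (by positivity)]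
    nlinarith
  have hnm' : n * m < 4 := by exact_mod_cast hnm
  have hn1 : n < 0 := by exact_mod_cast hn'
  have hm1 : m < 0 := by exact_mod_cast hm'
  rcases (show n = -1 ∨ m = -1 by
    by_contra! h
    nlinarith [show n ≤ -2 by omega, show m ≤ -2 by omega]) with h | h
  · have hmem := S.refl_mem β hR β' hR'
    rw [sRefl_apply, inner_coroot, real_inner_comm, hn, h] at hmem
    simpa [add_comm] using hmem
  · have hmem := S.refl_mem β' hR' β hR
    rw [sRefl_apply, inner_coroot, hm, h] at hmem
    simpa using hmem

lemma inner_eq_zero_of_stronglyOrthogonal {β β' : E} (hβ : β ∈ S.simples)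
    (hβ' : β' ∈ S.simples) (h : StronglyOrthogonal S β β') : ⟪β, β'⟫ = 0 := by
  obtain ⟨hadd, -, -, hsub⟩ := h
  refine le_antisymm (S.inner_nonpos_of_mem_simples hβ hβ' (sub_ne_zero.1 hsub)) ?_
  by_contra! hneg
  exact hadd (S.add_mem_of_inner_neg hβ hβ' hneg)

lemma corootCoeffs_spec {α : E} (hα : α ∈ S.pos) :
    (∀ β, β ∉ S.simples → corootCoeffs S α β = 0) ∧
      coroot α = ∑ β ∈ S.simples, (corootCoeffs S α β : ℝ) • coroot β := by
  have hex : ∃ c : E → ℕ, (∀ β, β ∉ S.simples → c β = 0) ∧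
      coroot α = ∑ β ∈ S.simples, (c β : ℝ) • coroot β := by
    obtain ⟨c, hc⟩ := S.coroot_comb α hα
    refine ⟨fun β => if β ∈ S.simples then c β else 0, fun β hβ => by simp [hβ], ?_⟩
    rw [hc]
    exact Finset.sum_congr rfl fun x hx => by simp only [if_pos hx]
  rw [corootCoeffs, dif_pos hex]
  exact hex.choose_spec

lemma corootCoeffs_eq {α β : E} (hα : α ∈ S.pos) (hβ : β ∈ S.simples) :
    (corootCoeffs S α β : ℝ) = ⟪β, β⟫ / ⟪α, α⟫ * S.coeff β α := by
  have hββ := S.inner_self_pos_of_mem (S.mem_R_of_mem_simples hβ)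
  have hαα := S.inner_self_pos_of_mem (S.pos_subset hα)
  have h := congrArg (S.coeff β) (S.corootCoeffs_spec hα).2
  simp only [coroot, map_smul, smul_smul] at h
  rw [S.coeff_sum_smul _ hβ, smul_eq_mul] at h
  field_simp
  field_simp at h
  linarith

lemma degOf_ne_zero_iff {ΔP : Finset E} {α β : E} (hα : α ∈ S.pos) :
    degOf S ΔP α β ≠ 0 ↔ β ∉ ΔP ∧ β ∈ suppR S α := by
  rw [S.mem_suppR_iff hα, degOf]
  by_cases hβP : β ∈ ΔP
  · simp [hβP]
  by_cases hβ : β ∈ S.simples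
  · rw [if_neg hβP, ← Nat.cast_ne_zero (R := ℝ), S.corootCoeffs_eq hα hβ]
    simp [hβP, hβ, S.ne_zero_of_mem (S.mem_R_of_mem_simples hβ),
      S.ne_zero_of_mem (S.pos_subset hα)]
  · simp [hβP, hβ, (S.corootCoeffs_spec hα).1 β hβ]

lemma exists_degOf_ne_zero {ΔP : Finset E} (hΔP : ΔP ⊆ S.simples) {α : E} (hα : α ∈ S.pos)
    (hαP : α ∉ posP S ΔP) : ∃ β, degOf S ΔP α β ≠ 0 := by
  obtain ⟨β, hβ, hβP, hne⟩ := S.exists_coeff_ne_zero_of_notMem_posP hΔP hα hαP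
  exact ⟨β, (S.degOf_ne_zero_iff hα).2 ⟨hβP, (S.mem_suppR_iff hα).2 ⟨hβ, hne⟩⟩⟩

lemma degOf_eq_of_coeff_eq {ΔP : Finset E} {α α' : E} (hα : α ∈ S.pos) (hα' : α' ∈ S.pos)
    (hnorm : ‖α‖ = ‖α'‖) (h : ∀ β ∈ S.simples, β ∉ ΔP → S.coeff β α = S.coeff β α') :
    degOf S ΔP α = degOf S ΔP α' := by
  funext β
  simp only [degOf]
  split_ifs with hβP
  · rfl
  by_cases hβ : β ∈ S.simples
  · have hsq : ⟪α, α⟫ = ⟪α', α'⟫ := by rw [real_inner_self_eq_norm_sq, hnorm,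
      real_inner_self_eq_norm_sq]
    exact_mod_cast (S.corootCoeffs_eq hα hβ).trans
      ((h β hβ hβP ▸ hsq ▸ (S.corootCoeffs_eq hα' hβ)).symm)
  · rw [(S.corootCoeffs_spec hα).1 β hβ, (S.corootCoeffs_spec hα').1 β hβ]

noncomputable def height : E →ₗ[ℝ] ℝ := ∑ β ∈ S.simples, S.coeff β

lemma height_simple {β : E} (hβ : β ∈ S.simples) : S.height β = 1 := by
  simp [height, S.coeff_simple hβ, hβ]

lemma exists_mem_suppR_inner_pos {γ : E} (hγ : γ ∈ S.pos) :
    ∃ β ∈ suppR S γ, 0 < ⟪γ, β⟫ := by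
  have hγγ := S.inner_self_pos_of_mem (S.pos_subset hγ)
  rw [S.inner_eq_sum_coeff_mul] at hγγ
  obtain ⟨β, hβ, hpos⟩ := Finset.exists_lt_of_sum_lt (f := fun _ => (0 : ℝ))
    (by simpa using hγγ)
  have hc := S.coeff_nonneg hγ β
  refine ⟨β, (S.mem_suppR_iff hγ).2 ⟨hβ, ?_⟩, ?_⟩
  · rintro h0
    simp [h0] at hpos
  · rw [real_inner_comm]
    exact pos_of_mul_pos_right hpos hc

/-- The witness is `s_β γ = γ - ⟪γ, β^∨⟫ β`. -/
lemma exists_height_lt_of_inner_pos {C D : Finset E} (hCD : ∀ x ∈ C, ∀ y ∈ D, ⟪x, y⟫ = 0)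
    {γ β y : E} (hγ : γ ∈ S.pos) (hβ : β ∈ suppR S γ) (hβC : β ∈ C)
    (hy : y ∈ suppR S γ) (hyC : y ∉ C) (hpos : 0 < ⟪γ, β⟫) :
    ∃ τ ∈ S.pos, S.height τ < S.height γ ∧ suppR S τ ⊆ suppR S γ ∧ y ∈ suppR S τ ∧
      ∃ x ∈ suppR S τ, x ∉ D := by
  obtain ⟨hβs, hβc⟩ := (S.mem_suppR_iff hγ).1 hβ
  obtain ⟨hys, hyc⟩ := (S.mem_suppR_iff hγ).1 hy
  have hβR := S.mem_R_of_mem_simples hβs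
  have hββ := S.inner_self_pos_of_mem hβR
  have hyβ : y ≠ β := fun h => hyC (h ▸ hβC)
  set n := ⟪γ, coroot β⟫ with hn
  have hn0 : 0 < n := by rw [hn, inner_coroot]; positivity
  have hτR : γ - n • β ∈ S.R := sRefl_apply β γ ▸ S.refl_mem β hβR γ (S.pos_subset hγ)
  have hcoeff : ∀ x, x ≠ β → S.coeff x (γ - n • β) = S.coeff x γ := fun x hx => by
    simp [S.coeff_simple hβs, hx]
  have hτ := S.mem_pos_of_coeff_pos hτR (β := y)
    (by rw [hcoeff y hyβ]; exact (S.coeff_nonneg hγ y).lt_of_ne' hyc)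
  have hmem : ∀ x, x ≠ β → x ∈ suppR S γ → x ∈ suppR S (γ - n • β) := fun x hx hxγ => by
    rw [S.mem_suppR_iff hτ, hcoeff x hx]
    exact (S.mem_suppR_iff hγ).1 hxγ
  refine ⟨γ - n • β, hτ, ?_, fun x hx => ?_, hmem y hyβ hy, ?_⟩
  · simp [S.height_simple hβs, hn0]
  · obtain rfl | hxβ := eq_or_ne x β
    · exact hβ
    · rw [S.mem_suppR_iff hγ, ← hcoeff x hxβ]
      exact (S.mem_suppR_iff hτ).1 hx
  · -- otherwise `⟪γ, β⟫ = coeff β γ * ⟪β, β⟫` and `coeff β γ = n = 2 ⟪γ, β⟫ / ⟪β, β⟫`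
    by_contra! hD
    have hβD : β ∉ D := fun h => hββ.ne' (hCD β hβC β h)
    have hcβ : S.coeff β γ = n := by
      have : S.coeff β (γ - n • β) = 0 := by
        by_contra h
        exact hβD (hD β ((S.mem_suppR_iff hτ).2 ⟨hβs, h⟩))
      simpa [S.coeff_simple hβs, sub_eq_zero] using this
    have hinner : ⟪γ, β⟫ = S.coeff β γ * ⟪β, β⟫ := by
      rw [S.inner_eq_sum_coeff_mul]
      refine Finset.sum_eq_single β (fun x hx hxβ => ?_) (fun h => absurd hβs h)
      by_cases hc : S.coeff x γ = 0
      · simp [hc]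
      · have hxD := hD x (hmem x hxβ ((S.mem_suppR_iff hγ).2 ⟨hx, hc⟩))
        rw [real_inner_comm, hCD β hβC x hxD, mul_zero]
    rw [hn, inner_coroot, hinner] at hcβ
    field_simp at hcβ
    linarith

/-- Supports of positive roots are connected. -/
lemma suppR_subset_or_subset {C D : Finset E} (hCD : ∀ x ∈ C, ∀ y ∈ D, ⟪x, y⟫ = 0)
    {γ : E} (hγ : γ ∈ S.pos) (hsub : suppR S γ ⊆ C ∪ D) :
    suppR S γ ⊆ C ∨ suppR S γ ⊆ D := by
  by_contra! h
  obtain ⟨⟨y, hy, hyC⟩, ⟨x, hx, hxD⟩⟩ := And.imp Finset.not_subset.1 Finset.not_subset.1 h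
  set bad := S.pos.filter fun τ => suppR S τ ⊆ C ∪ D ∧ (∃ x ∈ suppR S τ, x ∉ D) ∧
    ∃ y ∈ suppR S τ, y ∉ C
  obtain ⟨γ₀, hγ₀, hmin⟩ := bad.exists_min_image S.height
    ⟨γ, Finset.mem_filter.2 ⟨hγ, hsub, ⟨x, hx, hxD⟩, y, hy, hyC⟩⟩
  obtain ⟨hpos₀, hsub₀, ⟨x, hx, hxD⟩, y, hy, hyC⟩ := Finset.mem_filter.1 hγ₀
  obtain ⟨β, hβ, hβpos⟩ := S.exists_mem_suppR_inner_pos hpos₀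
  rcases Finset.mem_union.1 (hsub₀ hβ) with hβC | hβD
  · obtain ⟨τ, hτ, hlt, hτsub, hyτ, hxτ⟩ :=
      S.exists_height_lt_of_inner_pos hCD hpos₀ hβ hβC hy hyC hβpos
    exact (hmin τ (Finset.mem_filter.2 ⟨hτ, hτsub.trans hsub₀, hxτ, y, hyτ, hyC⟩)).not_gt hlt
  · obtain ⟨τ, hτ, hlt, hτsub, hxτ, hyτ⟩ :=
      S.exists_height_lt_of_inner_pos
        (fun a ha b hb => by rw [real_inner_comm]; exact hCD b hb a ha) hpos₀ hβ hβD hx hxD hβpos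
    exact (hmin τ (Finset.mem_filter.2 ⟨hτ, hτsub.trans hsub₀, ⟨x, hxτ, hxD⟩, hyτ⟩)).not_gt hlt

lemma exists_suppR_subset_of_orthogonal {ι : Type*} {ΔP : Finset E} (hΔP : ΔP ⊆ S.simples)
    {A : ι → Finset E} (horth : Pairwise fun i j => ∀ x ∈ A i, ∀ y ∈ A j, ⟪x, y⟫ = 0)
    (hsat : ∀ i, ∀ p ∈ ΔP, p ∉ A i → ∀ x ∈ A i, ⟪x, p⟫ = 0)
    {γ : E} (hγ : γ ∈ S.pos) (hγP : γ ∉ posP S ΔP)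
    (hcov : ∀ β ∈ suppR S γ, β ∉ ΔP → ∃ i, β ∈ A i) : ∃ i, suppR S γ ⊆ A i := by
  obtain ⟨β₀, hβ₀, hβ₀P, hne⟩ := S.exists_coeff_ne_zero_of_notMem_posP hΔP hγ hγP
  have hβ₀γ : β₀ ∈ suppR S γ := (S.mem_suppR_iff hγ).2 ⟨hβ₀, hne⟩
  obtain ⟨i, hi⟩ := hcov β₀ hβ₀γ hβ₀P
  have horth' : ∀ x ∈ A i, ∀ y ∈ suppR S γ \ A i, ⟪x, y⟫ = 0 := by
    intro x hx y hy
    obtain ⟨hyγ, hyA⟩ := Finset.mem_sdiff.1 hy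
    by_cases hyP : y ∈ ΔP
    · exact hsat i y hyP hyA x hx
    · obtain ⟨j, hj⟩ := hcov y hyγ hyP
      exact horth (fun h : i = j => hyA (h ▸ hj)) x hx y hj
  refine ⟨i, (S.suppR_subset_or_subset horth' hγ fun x hx => ?_).resolve_right fun h => ?_⟩
  · by_cases hxA : x ∈ A i <;> simp [hxA, hx]
  · exact (Finset.mem_sdiff.1 (h hβ₀γ)).2 hi

lemma rootLE_add_smul {β : E} (hβ : β ∈ S.simples) (γ : E) (m : ℕ) :
    rootLE S γ (γ + (m : ℝ) • β) :=
  ⟨fun x => if x = β then m else 0, by simp [Finset.sum_ite_eq', hβ]⟩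

lemma coeff_nonneg_mul_inner_nonpos {γ β y : E} (hγ : γ ∈ S.pos) (hβ : β ∈ S.simples)
    (hβγ : β ∉ suppR S γ) : S.coeff y γ * ⟪y, β⟫ ≤ 0 := by
  by_cases hy : S.coeff y γ = 0
  · simp [hy]
  have hy' : y ∈ S.simples := by
    by_contra h
    exact hy (by simp [S.coeff_of_notMem h])
  have hyβ : y ≠ β := fun h => hβγ ((S.mem_suppR_iff hγ).2 ⟨hβ, h ▸ hy⟩)
  exact mul_nonpos_of_nonneg_of_nonpos (S.coeff_nonneg hγ y)
    (S.inner_nonpos_of_mem_simples hy' hβ hyβ)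

end RootSystemData

section

variable {E : Type} [NormedAddCommGroup E] [InnerProductSpace ℝ E] [FiniteDimensional ℝ E]
  {S : RootSystemData E} {ΔP : Finset E}

/-- Otherwise `s_β γ = γ + m β` (`m > 0`) would be a strictly larger root of the same degree. -/
lemma IsMaxRoot.inner_nonneg (hΔP : ΔP ⊆ S.simples) {d : E → ℕ} {γ β : E}
    (h : IsMaxRoot S ΔP d γ) (hβ : β ∈ ΔP) : 0 ≤ ⟪γ, β⟫ := by
  obtain ⟨hγ, hγP, hle, hmax⟩ := h
  by_contra! hneg
  have hβs := hΔP hβ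
  have hβR := S.mem_R_of_mem_simples hβs
  obtain ⟨n, hn⟩ := S.crystallographic β hβR γ (S.pos_subset hγ)
  have hn0 : (n : ℝ) < 0 := by
    rw [← hn, inner_coroot]
    exact div_neg_of_neg_of_pos (by linarith) (S.inner_self_pos_of_mem hβR)
  obtain ⟨m, rfl⟩ := Int.exists_eq_neg_ofNat (Int.cast_nonpos.1 hn0.le)
  have hτ : sRefl β γ = γ + (m : ℝ) • β := by
    rw [sRefl_apply, hn]
    push_cast
    module
  have hτR : γ + (m : ℝ) • β ∈ S.R := hτ ▸ S.refl_mem β hβR γ (S.pos_subset hγ)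
  have hcoeff : ∀ x, x ≠ β → S.coeff x (γ + (m : ℝ) • β) = S.coeff x γ := fun x hx => by
    simp [S.coeff_simple hβs, hx]
  obtain ⟨β₀, hβ₀, hβ₀P, hne⟩ := S.exists_coeff_ne_zero_of_notMem_posP hΔP hγ hγP
  have hβ₀β : β₀ ≠ β := fun h => hβ₀P (h ▸ hβ)
  have hτpos := S.mem_pos_of_coeff_pos hτR (β := β₀)
    (by rw [hcoeff β₀ hβ₀β]; exact (S.coeff_nonneg hγ β₀).lt_of_ne' hne)
  have hτP : γ + (m : ℝ) • β ∉ posP S ΔP := fun h =>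
    hne (hcoeff β₀ hβ₀β ▸ (S.mem_posP_iff hΔP hτpos).1 h β₀ hβ₀ hβ₀P)
  have hdeg : degOf S ΔP (γ + (m : ℝ) • β) = degOf S ΔP γ :=
    S.degOf_eq_of_coeff_eq hτpos hγ (hτ ▸ (sRefl β).norm_map γ)
      fun x _ hxP => hcoeff x fun h => hxP (h ▸ hβ)
  have heq := hmax _ hτpos hτP (hdeg ▸ hle) (S.rootLE_add_smul hβs γ m)
  have hm : (m : ℝ) = 0 := by
    simpa [S.ne_zero_of_mem hβR] using heq
  simp [hm] at hn0

lemma IsMaxRoot.inner_eq_zero_of_notMem_suppR (hΔP : ΔP ⊆ S.simples) {d : E → ℕ}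
    {γ β x : E} (h : IsMaxRoot S ΔP d γ) (hβ : β ∈ ΔP) (hβγ : β ∉ suppR S γ)
    (hx : x ∈ suppR S γ) : ⟪x, β⟫ = 0 := by
  have hγ := h.1
  have hterm := fun y (_ : y ∈ S.simples) => S.coeff_nonneg_mul_inner_nonpos (y := y) hγ
    (hΔP hβ) hβγ
  have hsum : ∑ y ∈ S.simples, S.coeff y γ * ⟪y, β⟫ = 0 :=
    le_antisymm (Finset.sum_nonpos hterm)
      ((S.inner_eq_sum_coeff_mul γ β) ▸ h.inner_nonneg hΔP hβ)
  obtain ⟨hxs, hxc⟩ := (S.mem_suppR_iff hγ).1 hx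
  have := (Finset.sum_eq_zero_iff_of_nonpos hterm).1 hsum x hxs
  exact (mul_eq_zero.1 this).resolve_left hxc

lemma IsGreedy.sum_degOf {l : List E} {d : E → ℕ} (h : IsGreedy S ΔP l d) :
    (l.map (degOf S ΔP)).sum = d := by
  induction l generalizing d with
  | nil => exact h.symm
  | cons α t ih =>
    rw [List.map_cons, List.sum_cons, ih h.2]
    exact add_tsub_cancel_of_le h.1.2.2.1

lemma IsGreedy.exists_isMaxRoot_of_mem {l : List E} {d : E → ℕ} (h : IsGreedy S ΔP l d)
    {α : E} (hα : α ∈ l) : ∃ f ≤ d, IsMaxRoot S ΔP f α := by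
  induction l generalizing d with
  | nil => cases hα
  | cons γ t ih =>
    rcases List.mem_cons.1 hα with rfl | hα
    · exact ⟨d, le_rfl, h.1⟩
    · obtain ⟨f, hf, hmax⟩ := ih h.2 hα
      exact ⟨f, hf.trans tsub_le_self, hmax⟩

lemma IsGreedy.degOf_le_of_mem {l : List E} {d : E → ℕ} (h : IsGreedy S ΔP l d) {α : E}
    (hα : α ∈ l) : degOf S ΔP α ≤ d := by
  obtain ⟨f, hf, hmax⟩ := h.exists_isMaxRoot_of_mem hα
  exact hmax.2.2.1.trans hf

lemma mem_extSuppOf {β : E} {l : List E} : β ∈ extSuppOf S l ↔ ∃ γ ∈ l, β ∈ suppR S γ := by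
  induction l with
  | nil => simp [extSuppOf]
  | cons α t ih =>
    change β ∈ suppR S α ∪ extSuppOf S t ↔ _
    simp [ih]

end

lemma List.length_eq_sum_length_filter {α ι : Type*} [Fintype ι] (p : ι → α → Bool)
    (l : List α) (h : ∀ a ∈ l, ∃! i, p i a) : l.length = ∑ i, (l.filter (p i)).length := by
  induction l with
  | nil => simp
  | cons a t ih =>
    obtain ⟨i₀, hi₀, huniq⟩ := h a List.mem_cons_self
    have hone : ∑ i, (if p i a = true then 1 else 0) = 1 := by
      rw [Finset.sum_eq_single i₀ (fun i _ hi => if_neg fun h => hi (huniq i h)) (by simp),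
        if_pos hi₀]
    simp only [← List.countP_eq_length_filter, List.countP_cons, Finset.sum_add_distrib,
      List.length_cons, hone] at ih ⊢
    rw [ih fun b hb => h b (List.mem_cons_of_mem a hb)]

section

variable {E : Type} [NormedAddCommGroup E] [InnerProductSpace ℝ E] [FiniteDimensional ℝ E]
  {S : RootSystemData E} {ΔP : Finset E} {ι : Type*}

structure IsBlockSplitting (S : RootSystemData E) (ΔP : Finset E) (d : ι → E → ℕ)
    (A : ι → Finset E) : Prop where
  subset_simples : ∀ i, A i ⊆ S.simples
  orthogonal : Pairwise fun i j => ∀ x ∈ A i, ∀ y ∈ A j, ⟪x, y⟫ = 0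
  inner_eq_zero : ∀ i, ∀ p ∈ ΔP, p ∉ A i → ∀ x ∈ A i, ⟪x, p⟫ = 0
  support_subset : ∀ i β, d i β ≠ 0 → β ∈ A i

lemma isBlockSplitting_extSuppOf (hΔP : ΔP ⊆ S.simples) {d : ι → E → ℕ} {g : ι → List E}
    (hg : ∀ i, IsGreedy S ΔP (g i) (d i))
    (hdisj : ∀ i j, i ≠ j → TotallyDisjoint S (extSuppOf S (g i)) (extSuppOf S (g j))) :
    IsBlockSplitting S ΔP d fun i => extSuppOf S (g i) := by
  have hsimples : ∀ i, extSuppOf S (g i) ⊆ S.simples := fun i β hβ => by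
    obtain ⟨γ, -, hβγ⟩ := mem_extSuppOf.1 hβ
    exact Finset.filter_subset _ _ hβγ
  refine ⟨hsimples, fun i j hij x hx y hy => S.inner_eq_zero_of_stronglyOrthogonal
    (hsimples i hx) (hsimples j hy) (hdisj i j hij x hx y hy), fun i p hp hpA x hx => ?_,
    fun i β hβ => ?_⟩
  · obtain ⟨γ, hγ, hxγ⟩ := mem_extSuppOf.1 hx
    obtain ⟨f, -, hmax⟩ := (hg i).exists_isMaxRoot_of_mem hγ
    exact hmax.inner_eq_zero_of_notMem_suppR hΔP hp
      (fun h => hpA (mem_extSuppOf.2 ⟨γ, hγ, h⟩)) hxγ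
  · rw [← (hg i).sum_degOf, Pi.list_sum_apply] at hβ
    obtain ⟨γ, hγ, hγβ⟩ : ∃ γ ∈ g i, degOf S ΔP γ β ≠ 0 := by
      simpa [List.sum_eq_zero_iff] using hβ
    obtain ⟨f, -, hmax⟩ := (hg i).exists_isMaxRoot_of_mem hγ
    exact mem_extSuppOf.2 ⟨γ, hγ, ((S.degOf_ne_zero_iff hmax.1).1 hγβ).2⟩

namespace IsBlockSplitting

variable {d : ι → E → ℕ} {A : ι → Finset E}

lemma eq_of_mem (h : IsBlockSplitting S ΔP d A) {i j : ι} {x : E} (hi : x ∈ A i)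
    (hj : x ∈ A j) : i = j := by
  by_contra hij
  exact (S.inner_self_pos_of_mem (S.mem_R_of_mem_simples (h.subset_simples i hi))).ne'
    (h.orthogonal hij x hi x hj)

lemma sum_apply_eq [Fintype ι] (h : IsBlockSplitting S ΔP d A) {e : ι → E → ℕ} (he : e ≤ d)
    {i : ι} {β : E} (hβ : β ∈ A i) : (∑ j, e j) β = e i β := by
  rw [Finset.sum_apply]
  refine Finset.sum_eq_single i (fun j _ hji => ?_) (by simp)
  by_contra hne
  exact hji (h.eq_of_mem (h.support_subset j β fun h0 => hne (by simpa [h0] using he j β)) hβ)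

lemma exists_degOf_le [Fintype ι] (hΔP : ΔP ⊆ S.simples) (h : IsBlockSplitting S ΔP d A)
    {e : ι → E → ℕ} (he : e ≤ d) {α : E} (hα : α ∈ S.pos) (hαP : α ∉ posP S ΔP)
    (hle : degOf S ΔP α ≤ ∑ j, e j) : ∃ i, degOf S ΔP α ≤ e i := by
  obtain ⟨i, hi⟩ := S.exists_suppR_subset_of_orthogonal hΔP h.orthogonal h.inner_eq_zero hα
    hαP fun β hβ hβP => by
      have hne : (∑ j, e j) β ≠ 0 := fun h0 =>
        (S.degOf_ne_zero_iff hα).2 ⟨hβP, hβ⟩ (by simpa [h0] using hle β)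
      rw [Finset.sum_apply] at hne
      obtain ⟨j, -, hj⟩ := Finset.exists_ne_zero_of_sum_ne_zero hne
      exact ⟨j, h.support_subset j β fun h0 => hj (by simpa [h0] using he j β)⟩
  refine ⟨i, fun β => ?_⟩
  by_cases h0 : degOf S ΔP α β = 0
  · simp [h0]
  · rw [← h.sum_apply_eq he (hi ((S.degOf_ne_zero_iff hα).1 h0).2)]
    exact hle β

lemma eq_of_degOf_le (hΔP : ΔP ⊆ S.simples) (h : IsBlockSplitting S ΔP d A) {α : E}
    (hα : α ∈ S.pos) (hαP : α ∉ posP S ΔP) {i j : ι} (hi : degOf S ΔP α ≤ d i)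
    (hj : degOf S ΔP α ≤ d j) : i = j := by
  obtain ⟨β, hβ⟩ := S.exists_degOf_ne_zero hΔP hα hαP
  exact h.eq_of_mem (h.support_subset i β fun h0 => hβ (by simpa [h0] using hi β))
    (h.support_subset j β fun h0 => hβ (by simpa [h0] using hj β))

lemma exists_isMaxRoot [Fintype ι] (hΔP : ΔP ⊆ S.simples) (h : IsBlockSplitting S ΔP d A)
    {e : ι → E → ℕ} (he : e ≤ d) {α : E} (hα : IsMaxRoot S ΔP (∑ j, e j) α) :
    ∃ i, IsMaxRoot S ΔP (e i) α := by
  obtain ⟨hpos, hP, hle, hmax⟩ := hα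
  obtain ⟨i, hi⟩ := h.exists_degOf_le hΔP he hpos hP hle
  exact ⟨i, hpos, hP, hi, fun α' h₁ h₂ h₃ =>
    hmax α' h₁ h₂ (h₃.trans (Finset.single_le_sum (fun _ _ => zero_le) (Finset.mem_univ i)))⟩

lemma isGreedy_filter [Fintype ι] [DecidableEq ι] (hΔP : ΔP ⊆ S.simples)
    (h : IsBlockSplitting S ΔP d A)
    {l : List E} {e : ι → E → ℕ} (he : e ≤ d) (hl : IsGreedy S ΔP l (∑ i, e i)) (i : ι) :
    IsGreedy S ΔP (l.filter fun α => degOf S ΔP α ≤ d i) (e i) := by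
  induction l generalizing e with
  | nil =>
    have hle : e i ≤ ∑ j, e j := Finset.single_le_sum (fun _ _ => zero_le) (Finset.mem_univ i)
    rw [hl] at hle
    exact funext fun β => Nat.eq_zero_of_le_zero (hle β)
  | cons α t ih =>
    obtain ⟨hmax, htail⟩ := hl
    obtain ⟨i₀, hi₀⟩ := h.exists_isMaxRoot hΔP he hmax
    have hiff : degOf S ΔP α ≤ d i ↔ i = i₀ :=
      ⟨fun hi => h.eq_of_degOf_le hΔP hi₀.1 hi₀.2.1 hi (hi₀.2.2.1.trans (he i₀)),
        fun hi => hi ▸ hi₀.2.2.1.trans (he i₀)⟩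
    set e' := Function.update e i₀ (e i₀ - degOf S ΔP α)
    have he' : e' ≤ d := fun j => by
      rcases eq_or_ne j i₀ with rfl | hj
      · simpa [e'] using tsub_le_self.trans (he j)
      · simpa [e', hj] using he j
    have hsum : ∑ j, e' j = ∑ j, e j - degOf S ΔP α := by
      rw [Finset.sum_update_of_mem (Finset.mem_univ i₀), ← Finset.add_sum_erase _ _
        (Finset.mem_univ i₀), tsub_add_eq_add_tsub hi₀.2.2.1, Finset.sdiff_singleton_eq_erase]
    have ih' := ih he' (hsum ▸ htail)
    rw [List.filter_cons]
    by_cases hi : i = i₀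
    · subst hi
      rw [if_pos (decide_eq_true (hiff.2 rfl))]
      exact ⟨hi₀, by simpa [e'] using ih'⟩
    · rw [if_neg (by simpa using mt hiff.1 hi)]
      simpa [e', hi] using ih'

lemma length_eq_sum_length_filter [Fintype ι] (hΔP : ΔP ⊆ S.simples)
    (h : IsBlockSplitting S ΔP d A) {l : List E} (hl : IsGreedy S ΔP l (∑ i, d i)) :
    l.length = ∑ i, (l.filter fun α => degOf S ΔP α ≤ d i).length := by
  refine List.length_eq_sum_length_filter _ l fun α hα => ?_
  obtain ⟨f, -, hmax⟩ := hl.exists_isMaxRoot_of_mem hα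
  obtain ⟨i, hi⟩ := h.exists_degOf_le hΔP le_rfl hmax.1 hmax.2.1 (hl.degOf_le_of_mem hα)
  exact ⟨i, by simpa using hi,
    fun j hj => h.eq_of_degOf_le hΔP hmax.1 hmax.2.1 (by simpa using hj) hi⟩

lemma eq_filter [Fintype ι] (hΔP : ΔP ⊆ S.simples) (h : IsBlockSplitting S ΔP d A)
    {l : List E} (hl : IsGreedy S ΔP l (∑ i, d i)) {L : ι → List E}
    (hL : ∀ i, IsGreedy S ΔP (L i) (d i) ∧ (L i).Sublist l)
    (hlen : l.length = ∑ i, (L i).length) :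
    L = fun i => l.filter fun α => degOf S ΔP α ≤ d i := by
  have hsub : ∀ i, (L i).Sublist (l.filter fun α => degOf S ΔP α ≤ d i) := fun i => by
    have := (hL i).2.filter fun α => decide (degOf S ΔP α ≤ d i)
    rwa [List.filter_eq_self.2 fun α hα => by simpa using (hL i).1.degOf_le_of_mem hα] at this
  have heq := (Finset.sum_eq_sum_iff_of_le fun i _ => (hsub i).length_le).1
    (hlen ▸ h.length_eq_sum_length_filter hΔP hl)
  funext i
  exact (hsub i).eq_of_length (heq i (Finset.mem_univ i))

end IsBlockSplitting

end

theorem statement7_general {E : Type} [NormedAddCommGroup E] [InnerProductSpace ℝ E]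
    [FiniteDimensional ℝ E] (S : RootSystemData E) (ΔP : Finset E)
    (hΔP : ΔP ⊆ S.simples)
    (k : ℕ) (d : Fin k → (E → ℕ))
    (g : Fin k → List E) (hg : ∀ i, IsGreedy S ΔP (g i) (d i))
    (hdisj : ∀ i j, i ≠ j →
      TotallyDisjoint S (extSuppOf S (g i)) (extSuppOf S (g j)))
    (l : List E) (hl : IsGreedy S ΔP l (∑ i, d i)) :
    ∃! L : Fin k → List E,
      (∀ i, IsGreedy S ΔP (L i) (d i) ∧ (L i).Sublist l) ∧
        l.length = ∑ i, (L i).length := by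
  have h := isBlockSplitting_extSuppOf hΔP hg hdisj
  refine ⟨fun i => l.filter fun α => degOf S ΔP α ≤ d i,
    ⟨fun i => ⟨h.isGreedy_filter hΔP le_rfl hl i, List.filter_sublist⟩,
      h.length_eq_sum_length_filter hΔP hl⟩,
    fun L ⟨hL, hlen⟩ => h.eq_filter hΔP hl hL hlen⟩

/-- Converse of the addition theorem for greedy decompositions: let
`d₁, …, d_k` be degrees whose extended supports are pairwise totally disjoint, and let
`(α₁, …, α_r)` be a greedy decomposition of `d₁ + ⋯ + d_k`.  Then there exist unique
greedy decompositions `(α₁ⁱ, …, α_{rᵢ}ⁱ)` of `dᵢ` for each `i` such that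
`r = r₁ + ⋯ + r_k` and each `(α₁ⁱ, …, α_{rᵢ}ⁱ)` is a subsequence of `(α₁, …, α_r)`. -/
theorem statement7 {E : Type} [NormedAddCommGroup E] [InnerProductSpace ℝ E]
    [FiniteDimensional ℝ E] (S : RootSystemData E) (ΔP : Finset E)
    (hΔP : ΔP ⊆ S.simples)
    (k : ℕ) (d : Fin k → (E → ℕ)) (hdeg : ∀ i, IsDegree S ΔP (d i))
    (g : Fin k → List E) (hg : ∀ i, IsGreedy S ΔP (g i) (d i))
    (hdisj : ∀ i j, i ≠ j →
      TotallyDisjoint S (extSuppOf S (g i)) (extSuppOf S (g j)))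
    (l : List E) (hl : IsGreedy S ΔP l (∑ i, d i)) :
    ∃! L : Fin k → List E,
      (∀ i, IsGreedy S ΔP (L i) (d i) ∧ (L i).Sublist l) ∧
        l.length = ∑ i, (L i).length :=
  statement7_general S ΔP hΔP k d g hg hdisj l hl
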